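/- Let I₀(x) = ∑_{k=0}^∞ (x/2)^{2k} / (k!)² and I₁(x) = ∑_{k=0}^∞ (x/2)^{2k+1} / (k!·(k+1)!). For λ > 0 and σ ∈ [0, 1] define u_λ(σ) = 1 − σ² + (2λ / I₁(1/λ)) · ( I₀(σ/λ) − I₀(1/λ) ). Then for every σ ∈ [0, 1], u_λ(σ) → 1 − σ² as λ → 0⁺ (i.e., the limit along λ tending to 0 from within (0, ∞)). -/

import Mathlib

open Filter

/-- Modified Bessel function of the first kind of order 0. -/
noncomputable def besselI0 (x : ℝ) : ℝ :=
  ∑' k : ℕ, (x / 2) ^ (2 * k) / (k.factorial : ℝ) ^ 2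

/-- Modified Bessel function of the first kind of order 1. -/
noncomputable def besselI1 (x : ℝ) : ℝ :=
  ∑' k : ℕ, (x / 2) ^ (2 * k + 1) / ((k.factorial : ℝ) * ((k + 1).factorial : ℝ))

lemma fact_pos' (k : ℕ) : (0:ℝ) < (k.factorial : ℝ) := by
  exact_mod_cast k.factorial_pos

lemma fact_one_le (k : ℕ) : (1:ℝ) ≤ (k.factorial : ℝ) := by
  exact_mod_cast k.factorial_pos

lemma summable_a (x : ℝ) :
    Summable (fun k : ℕ => (x / 2) ^ (2 * k) / (k.factorial : ℝ) ^ 2) := by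
  refine Summable.of_nonneg_of_le (fun k => ?_) (fun k => ?_)
    (Real.summable_pow_div_factorial ((x/2)^2))
  · rw [pow_mul]; positivity
  · rw [pow_mul]
    gcongr
    all_goals first
      | positivity
      | exact fact_pos' k
      | exact le_self_pow₀ (fact_one_le k) (by norm_num)

lemma summable_b (x : ℝ) (hx : 0 ≤ x) :
    Summable (fun k : ℕ => (x / 2) ^ (2 * k + 1) / ((k.factorial : ℝ) * ((k + 1).factorial : ℝ))) := by
  refine Summable.of_nonneg_of_le (fun k => ?_) (fun k => ?_)
    ((Real.summable_pow_div_factorial ((x/2)^2)).mul_left (x/2))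
  · positivity
  · rw [pow_add, pow_mul, pow_one, mul_comm (((x/2)^2)^k), mul_div_assoc]
    gcongr
    all_goals first
      | positivity
      | exact fact_pos' k
      | (calc (k.factorial : ℝ) = k.factorial * 1 := (mul_one _).symm
          _ ≤ (k.factorial : ℝ) * ((k+1).factorial : ℝ) :=
              mul_le_mul_of_nonneg_left (fact_one_le _) (le_of_lt (fact_pos' k)))

lemma besselI0_nonneg (x : ℝ) (hx : 0 ≤ x) : 0 ≤ besselI0 x :=
  tsum_nonneg fun k => by positivity

lemma besselI0_mono {x y : ℝ} (hy : 0 ≤ y) (hxy : y ≤ x) : besselI0 y ≤ besselI0 x := by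
  apply Summable.tsum_le_tsum _ (summable_a y) (summable_a x)
  intro k
  gcongr
  all_goals first
    | exact le_of_lt (pow_pos (fact_pos' k) 2)
    | linarith

lemma besselI1_ge (x : ℝ) (hx : 0 ≤ x) : x / 2 ≤ besselI1 x := by
  rw [besselI1]
  calc x / 2 = (x/2)^(2*0+1)/(((0:ℕ).factorial : ℝ) * ((0+1).factorial : ℝ)) := by
        norm_num [Nat.factorial]
    _ ≤ _ := Summable.le_tsum (summable_b x hx) 0 (fun k _ => by positivity)

lemma besselI1_pos (x : ℝ) (hx : 0 < x) : 0 < besselI1 x :=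
  lt_of_lt_of_le (by linarith) (besselI1_ge x hx.le)

/-- Key termwise inequality: `a (k+1) ≤ b k + b (k+1)`. -/
lemma term_ineq (x : ℝ) (hx : 0 ≤ x) (k : ℕ) :
    (x / 2) ^ (2 * (k + 1)) / (((k+1).factorial : ℝ)) ^ 2 ≤
      (x / 2) ^ (2 * k + 1) / ((k.factorial : ℝ) * ((k + 1).factorial : ℝ)) +
      (x / 2) ^ (2 * (k+1) + 1) / (((k+1).factorial : ℝ) * ((k + 1 + 1).factorial : ℝ)) := by
  set t := x / 2 with ht
  have htn : 0 ≤ t := by positivity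
  have hF : (0:ℝ) < (k.factorial : ℝ) := fact_pos' k
  have e1 : ((k+1).factorial : ℝ) = ((k:ℝ)+1) * (k.factorial : ℝ) := by
    push_cast [Nat.factorial_succ]; ring
  have e2 : ((k+1+1).factorial : ℝ) = ((k:ℝ)+2) * (((k:ℝ)+1) * (k.factorial : ℝ)) := by
    push_cast [Nat.factorial_succ]; ring
  have hn : (0:ℝ) ≤ (k:ℝ) := Nat.cast_nonneg k
  have hP : (0:ℝ) ≤ t ^ (2*k+1) := by positivity
  have key : t * ((k:ℝ)+2) ≤ ((k:ℝ)+1)*((k:ℝ)+2) + t^2 := by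
    nlinarith [sq_nonneg (t - ((k:ℝ)+2)/2)]
  have c_le : t / (((k:ℝ)+1) * (k.factorial:ℝ))^2 ≤
      1/((k.factorial:ℝ) * (((k:ℝ)+1) * (k.factorial:ℝ))) +
      t^2/((((k:ℝ)+1) * (k.factorial:ℝ)) * (((k:ℝ)+2) * (((k:ℝ)+1) * (k.factorial:ℝ)))) := by
    rw [div_add_div _ _ (by positivity) (by positivity),
      div_le_div_iff₀ (by positivity) (by positivity)]
    nlinarith [mul_le_mul_of_nonneg_right key
      (by positivity : (0:ℝ) ≤ ((k:ℝ)+1)^3 * (k.factorial:ℝ)^4)]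
  have expand1 : t ^ (2*(k+1)) = t^(2*k+1) * t := by
    rw [show 2*(k+1) = (2*k+1)+1 from by ring, pow_succ]
  have expand2 : t ^ (2*(k+1)+1) = t^(2*k+1) * t^2 := by
    rw [show 2*(k+1)+1 = (2*k+1)+2 from by ring, pow_add]
  rw [e1, e2, expand1, expand2]
  have h := mul_le_mul_of_nonneg_left c_le hP
  calc t^(2*k+1) * t / (((k:ℝ)+1) * (k.factorial:ℝ))^2
      = t^(2*k+1) * (t / (((k:ℝ)+1) * (k.factorial:ℝ))^2) := by ring
    _ ≤ t^(2*k+1) * (1/((k.factorial:ℝ) * (((k:ℝ)+1) * (k.factorial:ℝ))) +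
        t^2/((((k:ℝ)+1) * (k.factorial:ℝ)) * (((k:ℝ)+2) * (((k:ℝ)+1) * (k.factorial:ℝ))))) := h
    _ = t^(2*k+1) / ((k.factorial:ℝ) * (((k:ℝ)+1) * (k.factorial:ℝ))) +
        t^(2*k+1) * t^2 / ((((k:ℝ)+1) * (k.factorial:ℝ)) *
          (((k:ℝ)+2) * (((k:ℝ)+1) * (k.factorial:ℝ)))) := by ring

lemma besselI0_le (x : ℝ) (hx : 0 ≤ x) : besselI0 x ≤ 1 + 2 * besselI1 x := by
  have hsa := summable_a x
  have hsb := summable_b x hx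
  have hsa' : Summable (fun k : ℕ => (x / 2) ^ (2 * (k+1)) / ((k+1).factorial : ℝ) ^ 2) :=
    (summable_nat_add_iff (f := fun k : ℕ => (x / 2) ^ (2 * k) / (k.factorial : ℝ) ^ 2) 1).2 hsa
  have hsb' : Summable (fun k : ℕ =>
      (x / 2) ^ (2 * (k+1) + 1) / (((k+1).factorial : ℝ) * ((k + 1 + 1).factorial : ℝ))) :=
    (summable_nat_add_iff (f := fun k : ℕ =>
      (x / 2) ^ (2 * k + 1) / ((k.factorial : ℝ) * ((k + 1).factorial : ℝ))) 1).2 hsb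
  have h0 : besselI0 x = 1 + ∑' k : ℕ, (x / 2) ^ (2 * (k+1)) / ((k+1).factorial : ℝ) ^ 2 := by
    rw [besselI0, Summable.tsum_eq_zero_add hsa]
    congr 1
    norm_num [Nat.factorial]
  have h1 : besselI1 x = x/2 + ∑' k : ℕ,
      (x / 2) ^ (2 * (k+1) + 1) / (((k+1).factorial : ℝ) * ((k + 1 + 1).factorial : ℝ)) := by
    rw [besselI1, Summable.tsum_eq_zero_add hsb]
    congr 1
    norm_num [Nat.factorial]
  have hle : (∑' k : ℕ, (x / 2) ^ (2 * (k+1)) / ((k+1).factorial : ℝ) ^ 2) ≤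
      ∑' k : ℕ, ((x / 2) ^ (2 * k + 1) / ((k.factorial : ℝ) * ((k + 1).factorial : ℝ)) +
        (x / 2) ^ (2 * (k+1) + 1) / (((k+1).factorial : ℝ) * ((k + 1 + 1).factorial : ℝ))) :=
    Summable.tsum_le_tsum (term_ineq x hx) hsa' (hsb.add hsb')
  rw [Summable.tsum_add hsb hsb'] at hle
  have hbb : (∑' k : ℕ, (x / 2) ^ (2 * k + 1) /
      ((k.factorial : ℝ) * ((k + 1).factorial : ℝ))) = besselI1 x := rfl
  rw [hbb] at hle
  have hb1 : (0:ℝ) ≤ x/2 := by positivity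
  linarith [h0, hle, h1]

/-- The nondimensionalized strong-adherence Poiseuille velocity profile converges
pointwise to the classical parabolic profile `1 − σ²` as `λ → 0⁺`. -/
theorem poiseuille_strong_adherence_convergence
    (σ : ℝ) (hσ : σ ∈ Set.Icc (0:ℝ) 1) :
    Tendsto (fun lam : ℝ =>
        1 - σ ^ 2 + 2 * lam / besselI1 (1 / lam)
          * (besselI0 (σ / lam) - besselI0 (1 / lam)))
      (nhdsWithin 0 (Set.Ioi 0)) (nhds (1 - σ ^ 2)) := by
  obtain ⟨hσ0, hσ1⟩ := hσ
  have h0 : Tendsto (fun lam : ℝ =>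
      2 * lam / besselI1 (1 / lam) * (besselI0 (σ / lam) - besselI0 (1 / lam)))
      (nhdsWithin 0 (Set.Ioi 0)) (nhds 0) := by
    have hg : Tendsto (fun lam : ℝ => -(4*lam^2+4*lam)) (nhdsWithin (0:ℝ) (Set.Ioi 0)) (nhds 0) := by
      have hc : Continuous fun lam : ℝ => -(4*lam^2+4*lam) := by continuity
      refine Tendsto.mono_left ?_ nhdsWithin_le_nhds
      simpa using hc.tendsto 0
    refine tendsto_of_tendsto_of_tendsto_of_le_of_le' hg tendsto_const_nhds ?_ ?_
    · filter_upwards [self_mem_nhdsWithin] with lam hlam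
      have hl : (0:ℝ) < lam := hlam
      have hx : (0:ℝ) < 1/lam := by positivity
      have hC : 0 < besselI1 (1/lam) := besselI1_pos _ hx
      have hsl0 : 0 ≤ σ/lam := by positivity
      have hsl1 : σ/lam ≤ 1/lam := by gcongr
      have hA : 0 ≤ besselI0 (σ/lam) := besselI0_nonneg _ hsl0
      have hB : besselI0 (1/lam) ≤ 1 + 2*besselI1 (1/lam) := besselI0_le _ hx.le
      have hCge : (1:ℝ) ≤ 2*lam*besselI1 (1/lam) := by
        have h := besselI1_ge (1/lam) hx.le
        calc (1:ℝ) = 2*lam*((1/lam)/2) := by field_simp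
          _ ≤ 2*lam*besselI1 (1/lam) := by
              exact mul_le_mul_of_nonneg_left h (by positivity)
      have hc1 : 0 ≤ 2*lam/besselI1 (1/lam) := by positivity
      have hDiv : 2*lam/besselI1 (1/lam) ≤ 4*lam^2 := by
        rw [div_le_iff₀ hC]
        nlinarith [mul_le_mul_of_nonneg_left hCge (le_of_lt hl)]
      have h2 : -(1+2*besselI1 (1/lam)) ≤ besselI0 (σ/lam) - besselI0 (1/lam) := by
        linarith
      have h3 := mul_le_mul_of_nonneg_left h2 hc1
      have h4 : (2*lam/besselI1 (1/lam)) * (-(1+2*besselI1 (1/lam)))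
          = -(2*lam/besselI1 (1/lam)) - 4*lam := by
        field_simp
        ring
      rw [h4] at h3
      linarith
    · filter_upwards [self_mem_nhdsWithin] with lam hlam
      have hl : (0:ℝ) < lam := hlam
      have hx : (0:ℝ) < 1/lam := by positivity
      have hC : 0 < besselI1 (1/lam) := besselI1_pos _ hx
      have hsl0 : 0 ≤ σ/lam := by positivity
      have hsl1 : σ/lam ≤ 1/lam := by gcongr
      have hmono : besselI0 (σ/lam) ≤ besselI0 (1/lam) := besselI0_mono hsl0 hsl1
      have hc1 : 0 ≤ 2*lam/besselI1 (1/lam) := by positivity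
      nlinarith [mul_nonneg hc1 (sub_nonneg.mpr hmono)]
  have := (tendsto_const_nhds (x := (1 - σ^2 : ℝ))
    (f := nhdsWithin (0:ℝ) (Set.Ioi 0))).add h0
  simpa using this
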